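/- Let G be a finite group and Z ≤ Z(G) ∩ O_p(G). Then G is of characteristic p if and only if G/Z is of characteristic p. -/

import Mathlib

variable (p : ℕ) (G : Type*) [Group G]

/-- `O_p(G)`: the join of all normal `p`-subgroups of `G` (the largest normal `p`-subgroup
when `G` is finite). -/
def pCore : Subgroup G :=
  ⨆ H : {H : Subgroup G // H.Normal ∧ IsPGroup p H}, H.1

/-- `O_{p'}(G)`: the join of all normal subgroups of order coprime to `p` (the largest normal
`p'`-subgroup when `G` is finite). -/
def pPrimeCore : Subgroup G :=
  ⨆ H : {H : Subgroup G // H.Normal ∧ Nat.Coprime (Nat.card H) p}, H.1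

lemma iSup_normal {G : Type*} [Group G] {ι : Sort*} (H : ι → Subgroup G)
    (h : ∀ i, (H i).Normal) : (⨆ i, H i).Normal := by
  constructor
  intro n hn g
  refine Subgroup.iSup_induction (C := fun x => g * x * g⁻¹ ∈ ⨆ i, H i) H hn
    (fun i x hx => ?_) ?_ (fun x y hx hy => ?_)
  · exact Subgroup.mem_iSup_of_mem i ((h i).conj_mem x hx g)
  · simpa using Subgroup.one_mem (⨆ i, H i)
  · have e : g * (x * y) * g⁻¹ = (g * x * g⁻¹) * (g * y * g⁻¹) := by group
    show g * (x * y) * g⁻¹ ∈ ⨆ i, H i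
    rw [e]; exact mul_mem hx hy

instance pCore_normal : (pCore p G).Normal := iSup_normal _ (fun i => i.2.1)

instance pPrimeCore_normal : (pPrimeCore p G).Normal := iSup_normal _ (fun i => i.2.1)

/-- A group `G` is of characteristic `p` if `C_G(O_p(G)) ≤ O_p(G)`. -/
def IsCharP : Prop :=
  Subgroup.centralizer ((pCore p G : Subgroup G) : Set G) ≤ pCore p G

/-- A group `G` is almost of characteristic `p` if `G/O_{p'}(G)` is of characteristic `p`. -/
def IsAlmostCharP : Prop := IsCharP p (G ⧸ pPrimeCore p G)

/-! Because `Z` is central and lies in `O_p(G)`, `O_p(G/Z) = O_p(G)/Z`, and `C_G(O_p(G))` maps into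
`C_{G/Z}(O_p(G)/Z)`; this gives the passage from `G/Z` to `G`. Conversely, let `D` be the preimage
of `C_{G/Z}(O_p(G)/Z)`. A `p'`-element `y ∈ D` acts on `w ∈ O_p(G)` by `y w y⁻¹ = c w` with
`c = [y, w] ∈ Z` central, so `y ^ m w y ^ (-m) = c ^ m w`; taking `m` the order of `y`, the
`p`-element `c` has `p'`-order, hence `c = 1`. Thus `y ∈ C_G(O_p(G)) ≤ O_p(G)`, forcing `y = 1`.
So the normal subgroup `D` is a `p`-group and lies in `O_p(G)`. -/

open Subgroup
open scoped commutatorElement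

variable {p G}

lemma le_pCore {H : Subgroup G} [H.Normal] (hH : IsPGroup p H) : H ≤ pCore p G :=
  le_iSup (fun H : {H : Subgroup G // H.Normal ∧ IsPGroup p H} => H.1) ⟨H, ‹_›, hH⟩

lemma isPGroup_pCore [Fact p.Prime] [Finite G] : IsPGroup p (pCore p G) :=
  have (H : {H : Subgroup G // H.Normal ∧ IsPGroup p H}) : H.1.Normal := H.2.1
  Sylow.iSup_of_normal _ fun H => H.2.2

lemma IsPGroup.eq_one_of_pow_eq_one {H : Subgroup G} (hH : IsPGroup p H) {g : G} (hg : g ∈ H)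
    {m : ℕ} (hm : p.Coprime m) (h : g ^ m = 1) : g = 1 := by
  have hcop := hH.orderOf_coprime hm ⟨g, hg⟩
  rw [Subgroup.orderOf_mk] at hcop
  exact orderOf_eq_one_iff.mp (hcop.eq_one_of_dvd (orderOf_dvd_of_pow_eq_one h))

lemma pCore_quotient_eq_map [Fact p.Prime] [Finite G] (Z : Subgroup G) [Z.Normal]
    (hZ : Z ≤ pCore p G) : pCore p (G ⧸ Z) = (pCore p G).map (QuotientGroup.mk' Z) := by
  refine le_antisymm ?_ (le_pCore (isPGroup_pCore.map _))
  have hker : IsPGroup p (QuotientGroup.mk' Z).ker := by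
    rw [QuotientGroup.ker_mk']; exact isPGroup_pCore.to_le hZ
  rw [← map_comap_eq_self_of_surjective (QuotientGroup.mk'_surjective Z) (pCore p (G ⧸ Z))]
  exact map_mono (le_pCore (isPGroup_pCore.comap_of_ker_isPGroup _ hker))

lemma pow_mul_eq_of_mul_eq {c y w : G} (hc : c ∈ center G) (h : y * w = c * w * y) (k : ℕ) :
    y ^ k * w = c ^ k * w * y ^ k := by
  induction k with
  | zero => simp
  | succ k ih =>
    have hck : y * c ^ k = c ^ k * y := (mem_center_iff.mp (pow_mem hc k)) y
    calc y ^ (k + 1) * w = y * (y ^ k * w) := by rw [pow_succ', mul_assoc]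
      _ = c ^ k * (y * w) * y ^ k := by rw [ih, ← mul_assoc, ← mul_assoc, hck, mul_assoc _ y]
      _ = c ^ (k + 1) * w * y ^ (k + 1) := by rw [h]; group

lemma commute_of_commutatorElement_mem {Z : Subgroup G} (hZ : Z ≤ center G)
    (hZp : IsPGroup p Z) {y w : G} {m : ℕ} (hm : p.Coprime m) (hy : y ^ m = 1)
    (h : ⁅y, w⁆ ∈ Z) : Commute y w := by
  have hyw : y * w = ⁅y, w⁆ * w * y := by rw [commutatorElement_def]; group
  have hcm : ⁅y, w⁆ ^ m = 1 := by simpa [hy] using pow_mul_eq_of_mul_eq (hZ h) hyw m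
  exact commutatorElement_eq_one_iff_commute.mp (hZp.eq_one_of_pow_eq_one h hm hcm)

lemma IsPGroup.of_forall_coprime_pow_eq_one [hp : Fact p.Prime] [Finite G] {H : Subgroup G}
    (h : ∀ g ∈ H, ∀ m, p.Coprime m → g ^ m = 1 → g = 1) : IsPGroup p H := by
  rintro ⟨g, hg⟩
  obtain ⟨a, m, hpm, hg_order⟩ :=
    Nat.exists_eq_pow_mul_and_not_dvd (orderOf_pos g).ne' p hp.out.ne_one
  have hpm' : p.Coprime m := (Nat.Prime.coprime_iff_not_dvd hp.out).2 hpm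
  refine ⟨a, Subtype.ext (h (g ^ p ^ a) (pow_mem hg _) m hpm' ?_)⟩
  rw [← pow_mul, ← hg_order, pow_orderOf_eq_one]

lemma eq_one_of_mk_mem_centralizer [Fact p.Prime] [Finite G]
    (h : IsCharP p G) {Z : Subgroup G} [Z.Normal] (hZ : Z ≤ center G ⊓ pCore p G) {y : G}
    (hy : QuotientGroup.mk' Z y ∈
      centralizer ((pCore p G).map (QuotientGroup.mk' Z) : Set (G ⧸ Z)))
    {m : ℕ} (hm : p.Coprime m) (hym : y ^ m = 1) : y = 1 := by
  have hZp : IsPGroup p Z := isPGroup_pCore.to_le (hZ.trans inf_le_right)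
  have hyP : y ∈ centralizer (pCore p G : Set G) := fun w hw => by
    refine (commute_of_commutatorElement_mem (hZ.trans inf_le_left) hZp hm hym ?_).symm.eq
    rw [← QuotientGroup.ker_mk' Z, MonoidHom.mem_ker, map_commutatorElement,
      commutatorElement_eq_one_iff_commute]
    exact (hy _ (mem_map_of_mem _ hw)).symm
  exact isPGroup_pCore.eq_one_of_pow_eq_one (h hyP) hm hym

lemma comap_centralizer_map_le_pCore [Fact p.Prime] [Finite G]
    (h : IsCharP p G) {Z : Subgroup G} [Z.Normal] (hZ : Z ≤ center G ⊓ pCore p G) :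
    (centralizer ((pCore p G).map (QuotientGroup.mk' Z) : Set (G ⧸ Z))).comap
      (QuotientGroup.mk' Z) ≤ pCore p G :=
  have : ((pCore p G).map (QuotientGroup.mk' Z)).Normal :=
    .map inferInstance _ (QuotientGroup.mk'_surjective Z)
  le_pCore <| IsPGroup.of_forall_coprime_pow_eq_one fun _ hy _ hm hym =>
    eq_one_of_mk_mem_centralizer h hZ hy hm hym

/-- Let `G` be a finite group and `Z ≤ Z(G) ∩ O_p(G)`. Then `G` is of characteristic `p` if and
only if `G/Z` is of characteristic `p`. -/
theorem isCharP_iff_quotient (p : ℕ) [Fact p.Prime] (G : Type*) [Group G] [Finite G]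
    (Z : Subgroup G) [Z.Normal] (hZ : Z ≤ Subgroup.center G ⊓ pCore p G) :
    IsCharP p G ↔ IsCharP p (G ⧸ Z) := by
  have hZP : Z ≤ pCore p G := hZ.trans inf_le_right
  have hsurj := QuotientGroup.mk'_surjective Z
  unfold IsCharP
  rw [pCore_quotient_eq_map Z hZP]
  constructor
  · intro h
    rw [← map_comap_eq_self_of_surjective hsurj (centralizer _)]
    exact map_mono (comap_centralizer_map_le_pCore h hZ)
  · intro h
    calc centralizer (pCore p G : Set G)
        ≤ (centralizer ((pCore p G).map (QuotientGroup.mk' Z) : Set (G ⧸ Z))).comap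
            (QuotientGroup.mk' Z) := by
          rw [← map_le_iff_le_comap, coe_map]
          exact map_centralizer_le_centralizer_image _ _
      _ ≤ ((pCore p G).map (QuotientGroup.mk' Z)).comap (QuotientGroup.mk' Z) := comap_mono h
      _ = pCore p G := by rw [comap_map_eq, QuotientGroup.ker_mk', sup_of_le_left hZP]
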